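/- Theorem (residual of the i-th stage with extended basis): Let J ∈ ℝ^{N×N} and for each stage i let V_{M;i} ∈ ℝ^{N×(M+i-1)} have orthonormal columns, with V_{M;1} = V_M, satisfying the extended Arnoldi relation J V_{M;i} = V_{M;i} H_{M;i} + (I - V_M V_Mᵀ) J v_M e_{M+i-1;M}ᵀ + Σ_{k=1}^{i-1} (I - V_{M;i} V_{M;i}ᵀ) J v_{M+k} e_{M+i-1;M+k}ᵀ. Suppose the stage quantities satisfy ψ_i = V_{M;i}ᵀ F_i with F_i ∈ range(V_{M;i}), λ̂_i = h ψ_i + h H_{M;i} Σ_{j=1}^{i} γ_{i,j} λ̂_j (with earlier λ̂_j zero-padded to length M+i-1), and k_i = V_{M;i} λ̂_i. Then the residual r_i := k_i - hF_i - hJ Σ_{j=1}^{i} γ_{i,j} k_j equals r_i = -h (I - V_M V_Mᵀ) J v_M e_{M+i-1;M}ᵀ Σ_{j=1}^{i} γ_{i,j} λ̂_j - h (I - V_{M;i} V_{M;i}ᵀ) J Σ_{k=1}^{i-1} v_{M+k} e_{M+i-1;M+k}ᵀ Σ_{j=1}^{i} γ_{i,j} λ̂_j. -/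

import Mathlib

open Matrix

/-!
Write `Λ = ∑ⱼ γⱼ λ̂ⱼ`, so that `∑ⱼ γⱼ kⱼ = V_{M;i} Λ`. Since `F` lies in the range of the
orthonormal basis, `V_{M;i} ψ = F`, hence `kᵢ = hF + h V_{M;i} H_{M;i} Λ`. Applying the extended
Arnoldi relation to `Λ` turns `J V_{M;i} Λ` into `V_{M;i} H_{M;i} Λ` plus the rank-one correction
terms weighted by the entries of `Λ`; everything but these corrections cancels in the residual.
-/

namespace Matrix

variable {R m n κ : Type*} [CommSemiring R]

theorem vecMulVec_single_one_mulVec [Fintype n] [DecidableEq n] (u : m → R) (i : n)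
    (x : n → R) : vecMulVec u (Pi.single i 1) *ᵥ x = x i • u := by
  rw [vecMulVec_mulVec, op_smul_eq_smul, single_dotProduct, one_mul]

theorem mulVec_transpose_mulVec_of_eq_mulVec [Fintype m] [Fintype n] [DecidableEq n]
    {W : Matrix m n R} (horth : Wᵀ * W = 1) {F : m → R} (hF : ∃ c, F = W *ᵥ c) :
    W *ᵥ (Wᵀ *ᵥ F) = F := by
  obtain ⟨c, rfl⟩ := hF
  rw [mulVec_mulVec, mulVec_mulVec, Matrix.mul_assoc, horth, Matrix.mul_one]

theorem mulVec_mulVec_of_mul_eq_add_vecMulVec [Fintype m] [Fintype n] [DecidableEq n]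
    [Fintype κ] {J : Matrix m m R} {W : Matrix m n R} {H : Matrix n n R} {u : m → R} {i₀ : n}
    {w : κ → m → R} {σ : κ → n}
    (hJW : J * W = W * H + vecMulVec u (Pi.single i₀ 1)
      + ∑ k, vecMulVec (w k) (Pi.single (σ k) 1)) (x : n → R) :
    J *ᵥ (W *ᵥ x) = W *ᵥ (H *ᵥ x) + x i₀ • u + ∑ k, x (σ k) • w k := by
  simp only [mulVec_mulVec, hJW, add_mulVec, sum_mulVec, vecMulVec_single_one_mulVec]

end Matrix

theorem stmt11_general {N M p : ℕ} (J : Matrix (Fin N) (Fin N) ℝ)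
    (W : Matrix (Fin N) (Fin (M + 1) ⊕ Fin p) ℝ)
    (horth : Wᵀ * W = 1)
    (V : Matrix (Fin N) (Fin (M + 1)) ℝ)
    (vM : Fin N → ℝ)
    (vbar : Fin p → Fin N → ℝ)
    (H : Matrix (Fin (M + 1) ⊕ Fin p) (Fin (M + 1) ⊕ Fin p) ℝ)
    -- the extended Arnoldi relation
    (hArn : J * W = W * H
      + Matrix.vecMulVec (((1 - V * Vᵀ) * J).mulVec vM)
          (Pi.single (Sum.inl (Fin.last M)) 1)
      + ∑ k : Fin p,
          Matrix.vecMulVec (((1 - W * Wᵀ) * J).mulVec (vbar k))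
            (Pi.single (Sum.inr k) 1))
    (h : ℝ) (γ : Fin (p + 1) → ℝ)
    (lamhat : Fin (p + 1) → (Fin (M + 1) ⊕ Fin p) → ℝ)
    (k : Fin (p + 1) → Fin N → ℝ)
    (hk : ∀ j, k j = W.mulVec (lamhat j))
    (F : Fin N → ℝ) (hF : ∃ c, F = W.mulVec c)
    (ψ : (Fin (M + 1) ⊕ Fin p) → ℝ) (hψ : ψ = Wᵀ.mulVec F)
    (hlam : lamhat (Fin.last p) = h • ψ
      + h • H.mulVec (∑ j : Fin (p + 1), γ j • lamhat j))
    (ri : Fin N → ℝ)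
    (hr : ri = k (Fin.last p) - h • F
      - h • J.mulVec (∑ j : Fin (p + 1), γ j • k j)) :
    ri = -(h * (∑ j : Fin (p + 1), γ j • lamhat j) (Sum.inl (Fin.last M)))
            • (((1 - V * Vᵀ) * J).mulVec vM)
        - ∑ kk : Fin p,
            (h * (∑ j : Fin (p + 1), γ j • lamhat j) (Sum.inr kk))
              • (((1 - W * Wᵀ) * J).mulVec (vbar kk)) := by
  set Λ := ∑ j : Fin (p + 1), γ j • lamhat j
  have hkΛ : ∑ j : Fin (p + 1), γ j • k j = W *ᵥ Λ := by
    simp only [Λ, hk, mulVec_sum, mulVec_smul]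
  have hklast : k (Fin.last p) = h • F + h • W *ᵥ (H *ᵥ Λ) := by
    rw [hk, hlam, mulVec_add, mulVec_smul, mulVec_smul, hψ,
      mulVec_transpose_mulVec_of_eq_mulVec horth hF]
  rw [hr, hklast, hkΛ, mulVec_mulVec_of_mul_eq_add_vecMulVec hArn]
  simp only [smul_add, neg_smul, mul_smul, Finset.smul_sum]
  abel

/-- residual of the `i`-th stage with extended basis.
Here the current stage is stage `i = p + 1`, the base Krylov basis `V` has `M + 1`
columns, and the extended basis `W = V_{M;i}` has `M + 1 + p = M + i` columns
(`v_{M+k}` for `k = 1, …, p` are the vectors added at previous stages).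
Earlier stage vectors `lamhat j` are the zero-padded reduced solutions, and
`k j = W lamhat j` (the padded form of `V_{M;j} λ_j`). -/
theorem stmt11 {N M p : ℕ} (J : Matrix (Fin N) (Fin N) ℝ)
    (W : Matrix (Fin N) (Fin (M + 1) ⊕ Fin p) ℝ)
    (horth : Wᵀ * W = 1)
    (V : Matrix (Fin N) (Fin (M + 1)) ℝ)
    (hV : V = Matrix.of fun n j => W n (Sum.inl j))
    (vM : Fin N → ℝ) (hvM : vM = fun n => V n (Fin.last M))
    (vbar : Fin p → Fin N → ℝ) (hvbar : ∀ k, vbar k = fun n => W n (Sum.inr k))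
    (H : Matrix (Fin (M + 1) ⊕ Fin p) (Fin (M + 1) ⊕ Fin p) ℝ)
    -- the extended Arnoldi relation
    (hArn : J * W = W * H
      + Matrix.vecMulVec (((1 - V * Vᵀ) * J).mulVec vM)
          (Pi.single (Sum.inl (Fin.last M)) 1)
      + ∑ k : Fin p,
          Matrix.vecMulVec (((1 - W * Wᵀ) * J).mulVec (vbar k))
            (Pi.single (Sum.inr k) 1))
    (h : ℝ) (γ : Fin (p + 1) → ℝ)
    (lamhat : Fin (p + 1) → (Fin (M + 1) ⊕ Fin p) → ℝ)
    (k : Fin (p + 1) → Fin N → ℝ)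
    (hk : ∀ j, k j = W.mulVec (lamhat j))
    (F : Fin N → ℝ) (hF : ∃ c, F = W.mulVec c)
    (ψ : (Fin (M + 1) ⊕ Fin p) → ℝ) (hψ : ψ = Wᵀ.mulVec F)
    (hlam : lamhat (Fin.last p) = h • ψ
      + h • H.mulVec (∑ j : Fin (p + 1), γ j • lamhat j))
    (ri : Fin N → ℝ)
    (hr : ri = k (Fin.last p) - h • F
      - h • J.mulVec (∑ j : Fin (p + 1), γ j • k j)) :
    ri = -(h * (∑ j : Fin (p + 1), γ j • lamhat j) (Sum.inl (Fin.last M)))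
            • (((1 - V * Vᵀ) * J).mulVec vM)
        - ∑ kk : Fin p,
            (h * (∑ j : Fin (p + 1), γ j • lamhat j) (Sum.inr kk))
              • (((1 - W * Wᵀ) * J).mulVec (vbar kk)) :=
  stmt11_general J W horth V vM vbar H hArn h γ lamhat k hk F hF ψ hψ hlam ri hr
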